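/- For functions P, P' : H → O on a finite set H with a fixed positive probability distribution, the kernel relation of P is refined by the kernel relation of P' (i.e., ≃_{P'} ⊑-above ≃_P in the lattice of information: h ≃_{P'} h' implies h ≃_P h') for all pairs if and only if for every probability distribution on H the entropy of the pushforward along P is at most the entropy of the pushforward along P'. -/

import Mathlib

/-!
If `P` factors through `P'` as `P = f ∘ P'`, then `R_P` is the pushforward of `R_{P'}` along `f`,
and merging outcomes cannot increase entropy because `q ↦ q log q` is superadditive on
nonnegative reals. Conversely, if `P' h = P' h'` but `P h ≠ P h'`, the uniform distribution on
`{h, h'}` gives `R_P` one bit of entropy and `R_{P'}` none.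
-/

open Finset Real

namespace InformationOrder

variable {ι κ : Type*}

theorem sum_mul_logb_le_sum_mul_logb_sum (s : Finset ι) {q : ι → ℝ} (hq : ∀ i ∈ s, 0 ≤ q i) :
    ∑ i ∈ s, q i * logb 2 (q i) ≤ (∑ i ∈ s, q i) * logb 2 (∑ i ∈ s, q i) := by
  rw [sum_mul]
  refine sum_le_sum fun i hi => ?_
  rcases (hq i hi).eq_or_lt with h0 | h0
  · simp [← h0]
  · exact mul_le_mul_of_nonneg_left
      (logb_le_logb_of_le one_lt_two h0 (single_le_sum hq hi)) (hq i hi)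

section

variable [Fintype ι] [DecidableEq κ]

/-- The distribution `R_f` of the outputs of `f` under the weights `q`. -/
noncomputable def pushforward (f : ι → κ) (q : ι → ℝ) (k : κ) : ℝ :=
  ∑ i ∈ univ.filter (fun i => f i = k), q i

noncomputable def entropy [Fintype κ] (q : κ → ℝ) : ℝ :=
  -∑ k, q k * logb 2 (q k)

theorem pushforward_nonneg {q : ι → ℝ} (hq : ∀ i, 0 ≤ q i) (f : ι → κ) (k : κ) :
    0 ≤ pushforward f q k :=
  sum_nonneg fun i _ => hq i

theorem pushforward_comp [Fintype κ] {μ : Type*} [DecidableEq μ] (g : ι → κ) (f : κ → μ)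
    (q : ι → ℝ) : pushforward (f ∘ g) q = pushforward f (pushforward g q) := by
  funext m
  simp only [pushforward]
  rw [sum_fiberwise_eq_sum_filter]
  congr 1
  ext i
  simp

theorem pushforward_add (f : ι → κ) (q r : ι → ℝ) :
    pushforward f (q + r) = pushforward f q + pushforward f r := by
  funext k
  simp only [pushforward, Pi.add_apply, sum_add_distrib]

theorem pushforward_single [DecidableEq ι] (f : ι → κ) (i : ι) (c : ℝ) :
    pushforward f (Pi.single i c) = Pi.single (f i) c := by
  funext k
  simp [pushforward, Pi.single_apply, eq_comm]

theorem entropy_pushforward_le [Fintype κ] {q : ι → ℝ} (hq : ∀ i, 0 ≤ q i) (f : ι → κ) :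
    entropy (pushforward f q) ≤ entropy q := by
  rw [entropy, entropy, neg_le_neg_iff, ← sum_fiberwise univ f]
  exact sum_le_sum fun k _ => sum_mul_logb_le_sum_mul_logb_sum _ fun i _ => hq i

end

variable [Fintype κ] [DecidableEq κ]

theorem entropy_single (k : κ) : entropy (Pi.single k 1) = 0 := by
  rw [entropy, Fintype.sum_eq_single k fun j hj => by simp [hj]]
  simp

theorem entropy_single_half_add_single_half {k k' : κ} (hk : k ≠ k') :
    entropy (Pi.single k (1 / 2) + Pi.single k' (1 / 2)) = 1 := by
  rw [entropy, Fintype.sum_eq_add k k' hk fun j hj => by simp [hj.1, hj.2]]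
  simp [hk, hk.symm]
  norm_num

end InformationOrder

open InformationOrder

theorem loi_order_iff_entropy_le_general {H O : Type} [Fintype H]
    [Fintype O] [DecidableEq O] (P P' : H → O) :
    (∀ h h' : H, P' h = P' h' → P h = P h') ↔
      (∀ p : H → ℝ, (∀ h, 0 ≤ p h) → ∑ h, p h = 1 →
        -(∑ o, (∑ h ∈ Finset.univ.filter (fun h => P h = o), p h) *
            Real.logb 2 (∑ h ∈ Finset.univ.filter (fun h => P h = o), p h))
          ≤
        -(∑ o, (∑ h ∈ Finset.univ.filter (fun h => P' h = o), p h) *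
            Real.logb 2 (∑ h ∈ Finset.univ.filter (fun h => P' h = o), p h))) := by
  classical
  refine ⟨fun hfac p hp _ => ?_, fun hent h h' hP' => ?_⟩
  · change entropy (pushforward P p) ≤ entropy (pushforward P' p)
    have hP : P = Function.extend P' P id ∘ P' :=
      funext fun h => (Function.FactorsThrough.extend_apply (hfac · ·) id h).symm
    rw [hP, pushforward_comp]
    exact entropy_pushforward_le (pushforward_nonneg hp P') _
  · by_contra hP
    set p : H → ℝ := Pi.single h (1 / 2) + Pi.single h' (1 / 2)
    have hp : ∀ x, 0 ≤ p x := fun x => by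
      simp only [p, Pi.add_apply, Pi.single_apply]; split_ifs <;> norm_num
    have hsum : ∑ x, p x = 1 := by
      simp [p, sum_add_distrib]; norm_num
    have hmass (Q : H → O) :
        pushforward Q p = Pi.single (Q h) (1 / 2) + Pi.single (Q h') (1 / 2) := by
      rw [pushforward_add, pushforward_single, pushforward_single]
    have hle : entropy (pushforward P p) ≤ entropy (pushforward P' p) := hent p hp hsum
    rw [hmass, hmass, entropy_single_half_add_single_half hP, ← hP', ← Pi.single_add] at hle
    norm_num [entropy_single] at hle

/-- Lattice-of-information order vs. entropy order: the kernel relation of `P'`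
refines that of `P` (i.e. `≃_P ⊑ ≃_{P'}`: `P' h = P' h' → P h = P h'`) iff for
every probability distribution on `H` the entropy of the pushforward along `P`
is at most the entropy of the pushforward along `P'`. -/
theorem loi_order_iff_entropy_le {H O : Type} [Fintype H] [Nonempty H]
    [Fintype O] [DecidableEq O] (P P' : H → O) :
    (∀ h h' : H, P' h = P' h' → P h = P h') ↔
      (∀ p : H → ℝ, (∀ h, 0 ≤ p h) → ∑ h, p h = 1 →
        -(∑ o, (∑ h ∈ Finset.univ.filter (fun h => P h = o), p h) *
            Real.logb 2 (∑ h ∈ Finset.univ.filter (fun h => P h = o), p h))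
          ≤
        -(∑ o, (∑ h ∈ Finset.univ.filter (fun h => P' h = o), p h) *
            Real.logb 2 (∑ h ∈ Finset.univ.filter (fun h => P' h = o), p h))) :=
  loi_order_iff_entropy_le_general P P'
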